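/- arXiv:0710.1880 — 2 statements merged into one kernel-verified Lean document; each statement's English description precedes it below -/
import Mathlib

section
/- Let T₁ be the restriction of M_{z²} on the Bergman space to the closed span L₁ of the odd monomials. Then T₁ is unitarily equivalent to the Bergman shift M_z on L²ₐ(𝔻): the unitary X determined by X eₖ = e_{2k+1} (in the orthonormal monomial bases) satisfies X M_z = T₁ X. -/
open ContinuousLinearMap

/-- The restriction T₁ of M_{z²} = M² to the closed span L₁ of the odd
monomials is unitarily equivalent to the Bergman shift M: the unitary X with
X eₖ = e_{2k+1}, whose range is L₁, satisfies X M = M² X. -/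
theorem stmt_10 {H : Type*} [NormedAddCommGroup H] [InnerProductSpace ℂ H] [CompleteSpace H]
    (e : HilbertBasis ℕ ℂ H) (M : H →L[ℂ] H)
    (hM : ∀ n : ℕ, M (e n) = ((Real.sqrt ((n + 1) / (n + 2)) : ℝ) : ℂ) • e (n + 1))
    (L1 : Submodule ℂ H)
    (hL1 : L1 = (Submodule.span ℂ (Set.range fun k : ℕ => e (2 * k + 1))).topologicalClosure) :
    ∃ X : H →L[ℂ] H, (∀ x, ‖X x‖ = ‖x‖) ∧ (∀ k : ℕ, X (e k) = e (2 * k + 1)) ∧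
      Set.range X = (L1 : Set H) ∧ ∀ x, X (M x) = (M ∘L M) (X x) := by
  classical
  set w : ℕ → H := fun k => e (2 * k + 1) with hw_def
  have hinj : Function.Injective (fun k : ℕ => 2 * k + 1) := by intro a b h; simp only [] at h; omega
  have hw : Orthonormal ℂ w := e.orthonormal.comp _ hinj
  set Y : lp (fun _ : ℕ => ℂ) 2 →ₗᵢ[ℂ] H := hw.orthogonalFamily.linearIsometry with hY
  set X₀ : H →ₗᵢ[ℂ] H := Y.comp e.repr.toLinearIsometry with hX₀
  set X : H →L[ℂ] H := X₀.toContinuousLinearMap with hX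
  have hXapp : ∀ x, X x = X₀ x := fun x => rfl
  have hXe : ∀ k : ℕ, X (e k) = e (2 * k + 1) := by
    intro k
    have h1 : e.repr (e k) = lp.single 2 k (1 : ℂ) := e.repr_self k
    have h2 : Y (lp.single 2 k (1 : ℂ)) =
        LinearIsometry.toSpanSingleton ℂ H (hw.1 k) (1 : ℂ) :=
      hw.orthogonalFamily.linearIsometry_apply_single (1 : ℂ)
    have : X (e k) = Y (e.repr (e k)) := rfl
    rw [this, h1, h2]
    simp [LinearIsometry.toSpanSingleton, w]
  refine ⟨X, fun x => X₀.norm_map x, hXe, ?_, ?_⟩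
  · -- range
    have hYrange : LinearMap.range Y.toLinearMap =
        (⨆ i, LinearMap.range
          (LinearIsometry.toSpanSingleton ℂ H (hw.1 i)).toLinearMap).topologicalClosure :=
      hw.orthogonalFamily.range_linearIsometry
    have hspan : (⨆ i, LinearMap.range
        (LinearIsometry.toSpanSingleton ℂ H (hw.1 i)).toLinearMap) =
        Submodule.span ℂ (Set.range w) := by
      rw [Submodule.span_range_eq_iSup]
      congr 1
      funext i
      exact (LinearMap.span_singleton_eq_range ℂ H (w i)).symm
    have hXrange : Set.range X = Set.range Y := by
      ext y
      constructor
      · rintro ⟨x, rfl⟩; exact ⟨e.repr x, rfl⟩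
      · rintro ⟨f, rfl⟩; exact ⟨e.repr.symm f, by simp [hXapp, hX₀, LinearIsometry.comp_apply]⟩
    rw [hXrange, hL1]
    have : Set.range Y = (LinearMap.range Y.toLinearMap : Set (H)) := rfl
    rw [this, hYrange, hspan]
  · -- intertwining
    have key : X ∘L M = (M ∘L M) ∘L X := by
      have hdense : Dense ((Submodule.span ℂ (Set.range e) : Submodule ℂ H) : Set H) := by
        have h := congrArg (fun s : Submodule ℂ H => (s : Set H)) e.dense_span
        rw [Submodule.topologicalClosure_coe] at h
        rw [dense_iff_closure_eq, h, Submodule.top_coe]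
      refine ContinuousLinearMap.ext_on hdense ?_
      rintro x ⟨n, rfl⟩
      have c1 : (2 * n + 1 : ℕ) + 1 = 2 * n + 2 := by ring
      have c2 : (2 * n + 2 : ℕ) + 1 = 2 * n + 3 := by ring
      simp only [ContinuousLinearMap.comp_apply, hM n, map_smul, hXe, hM (2 * n + 1),
        map_smul, hM (2 * n + 2), map_smul, smul_smul]
      rw [show 2 * n + 1 + 1 = 2 * n + 2 from by ring,
        show 2 * n + 2 + 1 = 2 * n + 3 from by ring,
        show 2 * (n + 1) + 1 = 2 * n + 3 from by ring]
      congr 1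
      push_cast
      rw [← Complex.ofReal_mul]
      congr 1
      rw [← Real.sqrt_mul (by positivity)]
      congr 1
      have h1 : (2 * (n : ℝ) + 1 + 2) ≠ 0 := by positivity
      have h2 : (2 * (n : ℝ) + 2 + 2) ≠ 0 := by positivity
      have h3 : ((n : ℝ) + 2) ≠ 0 := by positivity
      field_simp
      ring
    exact fun x => congrFun (congrArg DFunLike.coe key) x
end

section
/- The operators T₀ = M_{z²}|_{L₀} and T₁ = M_{z²}|_{L₁} on the even and odd parts of the Bergman space are weighted shifts with weights √((2k+1)/(2k+3)) and √((k+1)/(k+2)) respectively; since these weight sequences differ (e.g., at k = 0: √(1/3) ≠ √(1/2)), T₀ and T₁ are not unitarily equivalent. -/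
open scoped InnerProductSpace ComplexConjugate

/-- The weighted shifts T₀ (weights √((2k+1)/(2k+3))) and T₁ (weights
√((k+1)/(k+2))), i.e. M_{z²} restricted to the even and odd parts of the Bergman space,
are not unitarily equivalent since their weight sequences differ. -/
theorem stmt_14 {H : Type*} [NormedAddCommGroup H] [InnerProductSpace ℂ H] [CompleteSpace H]
    (e : HilbertBasis ℕ ℂ H) (S0 S1 : H →L[ℂ] H)
    (hS0 : ∀ k : ℕ, S0 (e k)
      = ((Real.sqrt ((2 * k + 1) / (2 * k + 3)) : ℝ) : ℂ) • e (k + 1))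
    (hS1 : ∀ k : ℕ, S1 (e k)
      = ((Real.sqrt ((k + 1) / (k + 2)) : ℝ) : ℂ) • e (k + 1)) :
    ¬ ∃ U : H ≃ₗᵢ[ℂ] H, ∀ x, U (S0 x) = S1 (U x) := by
  rintro ⟨U, hU⟩
  set w : ℕ → ℝ := fun k => Real.sqrt ((k + 1) / (k + 2)) with hw
  have hw_sq : ∀ k : ℕ, (1 : ℝ) / 2 ≤ (w k) ^ 2 := by
    intro k
    rw [hw]
    rw [Real.sq_sqrt (by positivity)]
    rw [div_le_div_iff₀ (by norm_num) (by positivity)]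
    have : (0 : ℝ) ≤ (k : ℝ) := Nat.cast_nonneg k
    nlinarith
  have horth : ∀ i j : ℕ, ⟪e i, e j⟫_ℂ = if i = j then 1 else 0 :=
    orthonormal_iff_ite.mp e.orthonormal
  have hnorm1 : ∀ n : ℕ, ‖e n‖ = 1 := fun n => e.orthonormal.1 n
  have key : ∀ y : H, (1 / 2 : ℝ) * ‖y‖ ^ 2 ≤ ‖S1 y‖ ^ 2 := by
    intro y
    set c : ℕ → ℂ := fun k => e.repr y k with hc
    have h1 : HasSum (fun k => (c k * (w k : ℂ)) • e (k + 1)) (S1 y) := by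
      have := (e.hasSum_repr y).mapL S1
      convert this using 2 with k
      rw [ContinuousLinearMap.map_smul, hS1, smul_smul]
    -- coefficient formulas
    have hcoef0 : ⟪e 0, S1 y⟫_ℂ = 0 := by
      have h2 : HasSum (fun k => ⟪e (0 : ℕ), (c k * (w k : ℂ)) • e (k + 1)⟫_ℂ)
          ⟪e (0 : ℕ), S1 y⟫_ℂ := h1.mapL (innerSL ℂ (e 0))
      have h3 : (fun k => ⟪e (0 : ℕ), (c k * (w k : ℂ)) • e (k + 1)⟫_ℂ)
          = fun _ => (0 : ℂ) := by
        funext k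
        rw [inner_smul_right, horth, if_neg (by omega)]
        simp
      rw [h3] at h2
      exact h2.unique hasSum_zero
    have hcoefS : ∀ m : ℕ, ⟪e (m + 1), S1 y⟫_ℂ = c m * (w m : ℂ) := by
      intro m
      have h2 : HasSum (fun k => ⟪e (m + 1), (c k * (w k : ℂ)) • e (k + 1)⟫_ℂ)
          ⟪e (m + 1), S1 y⟫_ℂ := h1.mapL (innerSL ℂ (e (m + 1)))
      have h3 : (fun k => ⟪e (m + 1), (c k * (w k : ℂ)) • e (k + 1)⟫_ℂ)
          = fun k => if k = m then c m * (w m : ℂ) else 0 := by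
        funext k
        rw [inner_smul_right, horth]
        by_cases hk : k = m
        · subst hk; simp
        · rw [if_neg (by omega), if_neg hk]
          simp
      rw [h3] at h2
      exact h2.unique (hasSum_ite_eq m _)
    -- Parseval for S1 y
    have hps : HasSum (fun n => ‖⟪e n, S1 y⟫_ℂ‖ ^ 2) (‖S1 y‖ ^ 2) := by
      have h' := e.hasSum_inner_mul_inner (S1 y) (S1 y)
      have h4 : (fun i => ⟪S1 y, e i⟫_ℂ * ⟪e i, S1 y⟫_ℂ)
          = fun i => ((‖⟪e i, S1 y⟫_ℂ‖ ^ 2 : ℝ) : ℂ) := by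
        funext i
        rw [← inner_conj_symm (S1 y) (e i), Complex.conj_mul']
        push_cast; ring
      rw [h4] at h'
      have h5 := h'.mapL Complex.reCLM
      simp only [Complex.reCLM_apply, Complex.ofReal_re] at h5
      have h6 : (⟪S1 y, S1 y⟫_ℂ).re = ‖S1 y‖ ^ 2 := by
        rw [← RCLike.re_to_complex, inner_self_eq_norm_sq]
      rwa [h6] at h5
    -- Parseval for y
    have hpy : HasSum (fun n => ‖c n‖ ^ 2) (‖y‖ ^ 2) := by
      have h' := e.hasSum_inner_mul_inner y y
      have h4 : (fun i => ⟪y, e i⟫_ℂ * ⟪e i, y⟫_ℂ)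
          = fun i => ((‖c i‖ ^ 2 : ℝ) : ℂ) := by
        funext i
        rw [← inner_conj_symm y (e i), Complex.conj_mul']
        simp only [hc, HilbertBasis.repr_apply_apply]
        push_cast; ring
      rw [h4] at h'
      have h5 := h'.mapL Complex.reCLM
      simp only [Complex.reCLM_apply, Complex.ofReal_re] at h5
      have h6 : (⟪y, y⟫_ℂ).re = ‖y‖ ^ 2 := by
        rw [← RCLike.re_to_complex, inner_self_eq_norm_sq]
      rwa [h6] at h5
    -- reindex hps by the shift
    have hshift : HasSum (fun m => ‖c m‖ ^ 2 * (w m) ^ 2) (‖S1 y‖ ^ 2) := by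
      have hinj : Function.Injective (fun m : ℕ => m + 1) := fun a b h => by simpa using h
      have h5 := (Function.Injective.hasSum_iff hinj
        (f := fun n => ‖⟪e n, S1 y⟫_ℂ‖ ^ 2)
        (by
          intro n hn
          match n, hn with
          | 0, _ => simp [hcoef0]
          | m + 1, hn => exact absurd ⟨m, rfl⟩ hn)).mpr hps
      convert h5 using 2 with m
      simp only [Function.comp]
      rw [hcoefS m, norm_mul, mul_pow, Complex.norm_real, Real.norm_eq_abs, sq_abs]
    refine hasSum_le (fun m => ?_) (hpy.mul_left (1 / 2)) hshift
    have h5 : (0 : ℝ) ≤ ‖c m‖ ^ 2 := sq_nonneg _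
    nlinarith [hw_sq m]
  -- contradiction at y = U (e 0)
  have h6 : ‖S1 (U (e 0))‖ ^ 2 = 1 / 3 := by
    rw [← hU, hS0 0, map_smul, norm_smul, LinearIsometryEquiv.norm_map, hnorm1 (0 + 1),
      mul_one, Complex.norm_real, Real.norm_eq_abs, sq_abs,
      Real.sq_sqrt (by norm_num)]
    norm_num
  have h7 := key (U (e 0))
  rw [LinearIsometryEquiv.norm_map, hnorm1 0, h6] at h7
  norm_num at h7
end
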